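/- Consider the iterates of the iterative adaptive sketching algorithm: x̃^{(0)} = 0, and for t ≥ 1, x̃^{(t)} = −λ⁻¹Aᵀ∇f(ASα^{(t)} + Ax̃^{(t−1)}) where α^{(t)} minimizes α ↦ f(ASα + Ax̃^{(t−1)}) + (λ/2)‖Sα + x̃^{(t−1)}‖₂². If λ ≥ 2μZ_f², then after T iterations, ‖x̃^{(T)} − x*‖₂ ≤ (μZ_f²/(2λ))^{T/2} · ‖x*‖₂. -/

import Mathlib

open Matrix Finset Real Set

noncomputable section

namespace Sketch

/-- The ℓ2 norm of a vector in `Fin k → ℝ`. -/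
def norm2 {k : ℕ} (x : Fin k → ℝ) : ℝ := Real.sqrt (∑ i, x i ^ 2)

/-- The continuous linear functional `v ↦ ⟨w, v⟩`; used to state that a function has
gradient `w` at a point. -/
def dotCLM {k : ℕ} (w : Fin k → ℝ) : (Fin k → ℝ) →L[ℝ] ℝ :=
  LinearMap.toContinuousLinearMap
    { toFun := fun v => w ⬝ᵥ v
      map_add' := fun a b => dotProduct_add w a b
      map_smul' := fun c a => by
        simp [dotProduct, Finset.mul_sum, mul_left_comm] }

/-- The domain of the Fenchel conjugate `f*`. -/
def fenchelDom {k : ℕ} (f : (Fin k → ℝ) → ℝ) : Set (Fin k → ℝ) :=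
  {z | BddAbove (Set.range fun w => w ⬝ᵥ z - f w)}

/-- The Fenchel conjugate `f*(z) = sup_w (⟨w, z⟩ - f(w))` (as a real-valued supremum,
meaningful on `fenchelDom f`). -/
def fenchel {k : ℕ} (f : (Fin k → ℝ) → ℝ) (z : Fin k → ℝ) : ℝ :=
  ⨆ w, (w ⬝ᵥ z - f w)

/-- The subdifferential of the Fenchel conjugate `f*` at `z`. -/
def fenchelSubdiff {k : ℕ} (f : (Fin k → ℝ) → ℝ) (z : Fin k → ℝ) : Set (Fin k → ℝ) :=
  {g | ∀ y ∈ fenchelDom f, fenchel f z + g ⬝ᵥ (y - z) ≤ fenchel f y}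

/-- `P` is the orthogonal projector onto the range (column space) of `S`. -/
def IsOrthProj {q m : ℕ} (S : Matrix (Fin q) (Fin m) ℝ) (P : Matrix (Fin q) (Fin q) ℝ) : Prop :=
  Pᵀ = P ∧ P * P = P ∧ P * S = S ∧ ∃ C : Matrix (Fin m) (Fin q) ℝ, P = S * C

/-- The quantity `Z_f`: the supremum of `(Δᵀ B P⊥ Bᵀ Δ)^{1/2} / ‖Δ‖₂` over nonzero
`Δ ∈ dom f* - z*`. -/
def Zf {k q : ℕ} (f : (Fin k → ℝ) → ℝ) (B : Matrix (Fin k) (Fin q) ℝ)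
    (Pperp : Matrix (Fin q) (Fin q) ℝ) (zs : Fin k → ℝ) : ℝ :=
  sSup {r | ∃ Δ : Fin k → ℝ, Δ ≠ 0 ∧ zs + Δ ∈ fenchelDom f ∧
    r = Real.sqrt (Δ ⬝ᵥ (B * Pperp * Bᵀ).mulVec Δ) / norm2 Δ}

/-- The spectral norm (largest singular value) of a matrix. -/
def specNorm {a b : ℕ} (M : Matrix (Fin a) (Fin b) ℝ) : ℝ :=
  sSup {r | ∃ v : Fin b → ℝ, norm2 v = 1 ∧ r = norm2 (M.mulVec v)}

/-- The eigenvalues of `A * Aᵀ` (i.e. the squared singular values of `A`),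
sorted in decreasing order. -/
def eigsDesc {n d : ℕ} (A : Matrix (Fin n) (Fin d) ℝ) : Fin n → ℝ := fun i =>
  ((Matrix.isHermitian_mul_conjTranspose_self A).eigenvalues ∘
    Tuple.sort (Matrix.isHermitian_mul_conjTranspose_self A).eigenvalues) i.rev

/-- The spectral tail `R_k(A) = (σ_k² + (1/k) ∑_{j=k+1}^ρ σ_j²)^{1/2}`. -/
def Rk {n d : ℕ} (A : Matrix (Fin n) (Fin d) ℝ) (k : ℕ) : ℝ :=
  Real.sqrt ((∑ j : Fin n, if (j : ℕ) + 1 = k then eigsDesc A j else 0)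
    + (1 / (k : ℝ)) * ∑ j : Fin n, if k ≤ (j : ℕ) then eigsDesc A j else 0)

/-- Product measure on `n × m` matrices with i.i.d. standard Gaussian entries. -/
def gaussMatrix (n m : ℕ) : MeasureTheory.Measure (Fin n → Fin m → ℝ) :=
  MeasureTheory.Measure.pi fun _ => MeasureTheory.Measure.pi fun _ =>
    ProbabilityTheory.gaussianReal 0 1


/-- The largest eigenvalue (Rayleigh quotient supremum) of a symmetric matrix. -/
def eigMax {q : ℕ} (M : Matrix (Fin q) (Fin q) ℝ) : ℝ :=
  sSup {r | ∃ v : Fin q → ℝ, norm2 v = 1 ∧ r = v ⬝ᵥ M.mulVec v}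

/-- The smallest eigenvalue (Rayleigh quotient infimum) of a symmetric matrix. -/
def eigMin {q : ℕ} (M : Matrix (Fin q) (Fin q) ℝ) : ℝ :=
  sInf {r | ∃ v : Fin q → ℝ, norm2 v = 1 ∧ r = v ⬝ᵥ M.mulVec v}

/-! Write `y = S α + x̃` for the sketched point, `z = ∇f(A y)`, `z* = ∇f(A x*)` and `Δ = z - z*`.
Optimality of `x*` gives `Aᵀ z* = -λ x*`, and optimality of `α` says that `Aᵀ z + λ y` is
orthogonal to `range S`; hence the next iterate satisfies `x̃⁺ - x* = -λ⁻¹ AᵀΔ` with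
`P AᵀΔ = -λ P (y - x*)`, while `P⊥ (y - x*) = P⊥ (x̃ - x*)`. Co-coercivity of the `μ`-Lipschitz
gradient bounds `‖Δ‖² / μ` by `⟨AᵀΔ, y - x*⟩ = -λ ‖P (y - x*)‖² + ⟨P⊥ AᵀΔ, P⊥ (x̃ - x*)⟩`, and
`‖P⊥ AᵀΔ‖ ≤ Z_f ‖Δ‖` because the gradient `z` lies in `dom f*`. With `λ ≥ 2 μ Z_f²` these give
`‖x̃⁺ - x*‖² ≤ μ Z_f² / (2λ) · ‖x̃ - x*‖²`, which is iterated from `x̃⁰ = 0`.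
-/

end Sketch

open scoped RealInnerProductSpace

section SmoothConvex

variable {E : Type*} [NormedAddCommGroup E] [InnerProductSpace ℝ E] {f : E → ℝ} {f' : E → E}
  {μ : ℝ}

theorem hasDerivAt_apply_add_smul (hf : ∀ x, HasFDerivAt f (innerSL ℝ (f' x)) x) (x h : E)
    (t : ℝ) : HasDerivAt (fun s : ℝ => f (x + s • h)) ⟪f' (x + t • h), h⟫ t := by
  have hline : HasDerivAt (fun s : ℝ => x + s • h) h t := by
    simpa using ((hasDerivAt_id t).smul_const h).const_add x
  exact (hf (x + t • h)).comp_hasDerivAt t hline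

theorem ConvexOn.add_inner_sub_le (hconv : ConvexOn ℝ univ f)
    (hf : ∀ x, HasFDerivAt f (innerSL ℝ (f' x)) x) (x y : E) :
    f x + ⟪f' x, y - x⟫ ≤ f y := by
  have hline : ConvexOn ℝ univ (fun s : ℝ => f (x + s • (y - x))) := by
    simpa [Function.comp_def, AffineMap.lineMap_apply, add_comm] using
      hconv.comp_affineMap (AffineMap.lineMap x y)
  have hslope := hline.le_slope_of_hasDerivAt (mem_univ 0) (mem_univ 1) one_pos
    (by simpa using hasDerivAt_apply_add_smul hf x (y - x) 0)
  simp [slope_def_field] at hslope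
  linarith

theorem le_add_inner_add_sq_of_lipschitz (hf : ∀ x, HasFDerivAt f (innerSL ℝ (f' x)) x)
    (hL : ∀ x y, ‖f' x - f' y‖ ≤ μ * ‖x - y‖) (x h : E) :
    f (x + h) ≤ f x + ⟪f' x, h⟫ + μ / 2 * ‖h‖ ^ 2 := by
  set g : ℝ → ℝ := fun t => f (x + t • h) - t * ⟪f' x, h⟫ - μ / 2 * ‖h‖ ^ 2 * t ^ 2
  have hg : ∀ t, HasDerivAt g (⟪f' (x + t • h) - f' x, h⟫ - μ * ‖h‖ ^ 2 * t) t := by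
    intro t
    refine (((hasDerivAt_apply_add_smul hf x h t).sub (hasDerivAt_mul_const ⟪f' x, h⟫)).sub
      ((hasDerivAt_pow 2 t).const_mul (μ / 2 * ‖h‖ ^ 2))).congr_deriv ?_
    rw [inner_sub_left]; push_cast; ring
  have hg_nonpos : ∀ t ∈ interior (Ici (0 : ℝ)),
      ⟪f' (x + t • h) - f' x, h⟫ - μ * ‖h‖ ^ 2 * t ≤ 0 := by
    intro t ht
    rw [interior_Ici, Set.mem_Ioi] at ht
    have hLt : ‖f' (x + t • h) - f' x‖ ≤ μ * (t * ‖h‖) := by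
      simpa [norm_smul, abs_of_pos ht] using hL (x + t • h) x
    have hcs := (real_inner_le_norm _ _).trans (mul_le_mul_of_nonneg_right hLt (norm_nonneg h))
    linarith
  have hanti := antitoneOn_of_hasDerivWithinAt_nonpos (convex_Ici 0)
    (fun t _ => (hg t).continuousAt.continuousWithinAt)
    (fun t _ => (hg t).hasDerivWithinAt) hg_nonpos
  have h10 := hanti Set.self_mem_Ici (zero_le_one' ℝ) zero_le_one
  simp [g] at h10
  linarith

theorem ConvexOn.add_inner_sub_add_norm_sq_le (hconv : ConvexOn ℝ univ f)
    (hf : ∀ x, HasFDerivAt f (innerSL ℝ (f' x)) x) (hμ : 0 < μ)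
    (hL : ∀ x y, ‖f' x - f' y‖ ≤ μ * ‖x - y‖) (x y : E) :
    f x + ⟪f' x, y - x⟫ + (2 * μ)⁻¹ * ‖f' y - f' x‖ ^ 2 ≤ f y := by
  set g := f' y - f' x
  have hlow := hconv.add_inner_sub_le hf x (y + (-μ⁻¹) • g)
  have hup := le_add_inner_add_sq_of_lipschitz hf hL y ((-μ⁻¹) • g)
  have hsplit : ⟪f' x, y + (-μ⁻¹) • g - x⟫ = ⟪f' x, y - x⟫ - μ⁻¹ * ⟪f' x, g⟫ := by
    rw [add_sub_right_comm, inner_add_right, real_inner_smul_right]; ring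
  have hstep : ⟪f' y, (-μ⁻¹) • g⟫ + μ / 2 * ‖(-μ⁻¹) • g‖ ^ 2
      = -μ⁻¹ * ⟪f' y, g⟫ + (2 * μ)⁻¹ * ‖g‖ ^ 2 := by
    rw [real_inner_smul_right, norm_smul, mul_pow, Real.norm_eq_abs, sq_abs]
    field_simp
  have hg : μ⁻¹ * ⟪f' y, g⟫ - μ⁻¹ * ⟪f' x, g⟫ = 2 * ((2 * μ)⁻¹ * ‖g‖ ^ 2) := by
    rw [← mul_sub, ← inner_sub_left, real_inner_self_eq_norm_sq]
    ring
  rw [hsplit] at hlow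
  linarith

theorem ConvexOn.inv_mul_norm_sub_sq_le_inner (hconv : ConvexOn ℝ univ f)
    (hf : ∀ x, HasFDerivAt f (innerSL ℝ (f' x)) x) (hμ : 0 < μ)
    (hL : ∀ x y, ‖f' x - f' y‖ ≤ μ * ‖x - y‖) (x y : E) :
    μ⁻¹ * ‖f' y - f' x‖ ^ 2 ≤ ⟪f' y - f' x, y - x⟫ := by
  have hxy := hconv.add_inner_sub_add_norm_sq_le hf hμ hL x y
  have hyx := hconv.add_inner_sub_add_norm_sq_le hf hμ hL y x
  rw [norm_sub_rev] at hyx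
  have hsplit : ⟪f' y - f' x, y - x⟫ = -⟪f' y, x - y⟫ - ⟪f' x, y - x⟫ := by
    rw [inner_sub_left, ← neg_sub y x, inner_neg_right]; ring
  have hμ2 : μ⁻¹ = 2 * (2 * μ)⁻¹ := by field_simp
  rw [hsplit, hμ2]
  linarith

end SmoothConvex

namespace Sketch

variable {k : ℕ}

-- `Fin k → ℝ` carries the sup norm, so the inner-product results above are applied on
-- `EuclideanSpace ℝ (Fin k)` through `WithLp.toLp 2`.
theorem norm2_eq_norm (x : Fin k → ℝ) : norm2 x = ‖WithLp.toLp 2 x‖ := by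
  simp [norm2, EuclideanSpace.norm_eq]

theorem dotProduct_eq_inner (x y : Fin k → ℝ) :
    x ⬝ᵥ y = ⟪WithLp.toLp 2 x, WithLp.toLp 2 y⟫ := by
  simp [EuclideanSpace.inner_toLp_toLp, dotProduct_comm]

theorem norm2_sq (x : Fin k → ℝ) : norm2 x ^ 2 = x ⬝ᵥ x := by
  rw [norm2_eq_norm, dotProduct_eq_inner, real_inner_self_eq_norm_sq]

theorem norm2_nonneg (x : Fin k → ℝ) : 0 ≤ norm2 x := Real.sqrt_nonneg _

theorem norm2_pos {x : Fin k → ℝ} (hx : x ≠ 0) : 0 < norm2 x := by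
  rw [norm2_eq_norm]
  exact norm_pos_iff.2 fun h => hx (by simpa using congrArg WithLp.ofLp h)

theorem norm2_neg (x : Fin k → ℝ) : norm2 (-x) = norm2 x := by
  rw [norm2_eq_norm, norm2_eq_norm, WithLp.toLp_neg, norm_neg]

theorem norm2_smul (c : ℝ) (x : Fin k → ℝ) : norm2 (c • x) = |c| * norm2 x := by
  rw [norm2_eq_norm, norm2_eq_norm, WithLp.toLp_smul, norm_smul, Real.norm_eq_abs]

theorem dotProduct_le_norm2_mul (x y : Fin k → ℝ) : x ⬝ᵥ y ≤ norm2 x * norm2 y := by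
  rw [dotProduct_eq_inner, norm2_eq_norm, norm2_eq_norm]
  exact real_inner_le_norm _ _

theorem exists_norm2_mulVec_le {l : ℕ} (M : Matrix (Fin l) (Fin k) ℝ) :
    ∃ C, ∀ v, norm2 (M *ᵥ v) ≤ C * norm2 v := by
  let L := LinearMap.toContinuousLinearMap (Matrix.toEuclideanLin M)
  refine ⟨‖L‖, fun v => ?_⟩
  simpa [norm2_eq_norm, L] using L.le_opNorm (WithLp.toLp 2 v)

section Gradient

variable {f : (Fin k → ℝ) → ℝ} {f' : (Fin k → ℝ) → Fin k → ℝ} {μ : ℝ}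

theorem hasFDerivAt_comp_ofLp (hdiff : ∀ w, HasFDerivAt f (dotCLM (f' w)) w)
    (v : EuclideanSpace ℝ (Fin k)) :
    HasFDerivAt (f ∘ WithLp.ofLp) (innerSL ℝ (WithLp.toLp 2 (f' v.ofLp))) v := by
  have h := (hdiff v.ofLp).comp v (PiLp.continuousLinearEquiv 2 ℝ fun _ : Fin k => ℝ).hasFDerivAt
  refine h.congr_fderiv ?_
  ext w
  simp [dotCLM, PiLp.coe_continuousLinearEquiv, EuclideanSpace.inner_eq_star_dotProduct,
    dotProduct_comm]

theorem convexOn_comp_ofLp (hconv : ConvexOn ℝ univ f) :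
    ConvexOn ℝ univ (f ∘ (WithLp.ofLp : EuclideanSpace ℝ (Fin k) → Fin k → ℝ)) := by
  have h := hconv.comp_linearMap (WithLp.linearEquiv 2 ℝ (Fin k → ℝ)).toLinearMap
  rw [Set.preimage_univ] at h
  exact h

theorem add_dotProduct_sub_le (hconv : ConvexOn ℝ univ f)
    (hdiff : ∀ w, HasFDerivAt f (dotCLM (f' w)) w) (x y : Fin k → ℝ) :
    f x + f' x ⬝ᵥ (y - x) ≤ f y := by
  rw [dotProduct_eq_inner, WithLp.toLp_sub]
  exact (convexOn_comp_ofLp hconv).add_inner_sub_le (hasFDerivAt_comp_ofLp hdiff)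
    (WithLp.toLp 2 x) (WithLp.toLp 2 y)

theorem gradient_mem_fenchelDom (hconv : ConvexOn ℝ univ f)
    (hdiff : ∀ w, HasFDerivAt f (dotCLM (f' w)) w) (x : Fin k → ℝ) :
    f' x ∈ fenchelDom f := by
  refine ⟨f' x ⬝ᵥ x - f x, ?_⟩
  rintro _ ⟨w, rfl⟩
  have h := add_dotProduct_sub_le hconv hdiff x w
  rw [dotProduct_sub] at h
  change w ⬝ᵥ f' x - f w ≤ _
  rw [dotProduct_comm]
  linarith

theorem inv_mul_norm2_sub_sq_le_dotProduct (hconv : ConvexOn ℝ univ f)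
    (hdiff : ∀ w, HasFDerivAt f (dotCLM (f' w)) w) (hμ : 0 < μ)
    (hsmooth : ∀ w v, norm2 (f' w - f' v) ≤ μ * norm2 (w - v)) (x y : Fin k → ℝ) :
    μ⁻¹ * norm2 (f' y - f' x) ^ 2 ≤ (f' y - f' x) ⬝ᵥ (y - x) := by
  have hL : ∀ a b : EuclideanSpace ℝ (Fin k),
      ‖WithLp.toLp 2 (f' a.ofLp) - WithLp.toLp 2 (f' b.ofLp)‖ ≤ μ * ‖a - b‖ := by
    intro a b
    simpa [norm2_eq_norm] using hsmooth a.ofLp b.ofLp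
  rw [norm2_eq_norm, dotProduct_eq_inner, WithLp.toLp_sub, WithLp.toLp_sub]
  exact (convexOn_comp_ofLp hconv).inv_mul_norm_sub_sq_le_inner (hasFDerivAt_comp_ofLp hdiff) hμ
    hL (WithLp.toLp 2 x) (WithLp.toLp 2 y)

theorem transpose_mulVec_add_smul_eq_zero_of_forall_le {l q : ℕ}
    (hdiff : ∀ w, HasFDerivAt f (dotCLM (f' w)) w)
    (M : Matrix (Fin k) (Fin l) ℝ) (N : Matrix (Fin q) (Fin l) ℝ) (c : Fin k → ℝ)
    (c' : Fin q → ℝ) (lam : ℝ) (p : Fin l → ℝ)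
    (hmin : ∀ x, f (M *ᵥ p + c) + lam / 2 * norm2 (N *ᵥ p + c') ^ 2
      ≤ f (M *ᵥ x + c) + lam / 2 * norm2 (N *ᵥ x + c') ^ 2) :
    Mᵀ *ᵥ f' (M *ᵥ p + c) + lam • Nᵀ *ᵥ (N *ᵥ p + c') = 0 := by
  set a := M *ᵥ p + c
  set b := N *ᵥ p + c'
  set r := Mᵀ *ᵥ f' a + lam • Nᵀ *ᵥ b
  have hline : ∀ {j : ℕ} (u v : Fin j → ℝ), HasDerivAt (fun s : ℝ => u + s • v) v 0 := by
    intro j u v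
    simpa using ((hasDerivAt_id (0 : ℝ)).smul_const v).const_add u
  have hf : HasDerivAt (fun s : ℝ => f (a + s • M *ᵥ r)) (f' a ⬝ᵥ M *ᵥ r) 0 :=
    (hdiff a).comp_hasDerivAt_of_eq 0 (hline a (M *ᵥ r)) (by simp)
  have hq : HasDerivAt (fun s : ℝ => norm2 (b + s • N *ᵥ r) ^ 2) (2 * (b ⬝ᵥ N *ᵥ r)) 0 := by
    simp_rw [norm2_eq_norm]
    refine (HasDerivAt.norm_sq
      ((PiLp.continuousLinearEquiv 2 ℝ fun _ : Fin q => ℝ).symm.hasFDerivAt.comp_hasDerivAt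
        (0 : ℝ) (hline b (N *ᵥ r)))).congr_deriv ?_
    simp [dotProduct_eq_inner]
  have hloc : IsLocalMin
      (fun s : ℝ => f (a + s • M *ᵥ r) + lam / 2 * norm2 (b + s • N *ᵥ r) ^ 2) 0 :=
    Filter.Eventually.of_forall fun s => by
      simpa [a, b, mulVec_add, mulVec_smul, add_right_comm] using hmin (p + s • r)
  have hderiv := hloc.hasDerivAt_eq_zero (hf.add (hq.const_mul (lam / 2)))
  -- the derivative of the objective at `p` in the direction `r` is `r ⬝ᵥ r`
  have hr : r ⬝ᵥ r = f' a ⬝ᵥ M *ᵥ r + lam / 2 * (2 * (b ⬝ᵥ N *ᵥ r)) := by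
    rw [dotProduct_mulVec, dotProduct_mulVec, ← mulVec_transpose, ← mulVec_transpose]
    simp only [r, add_dotProduct, smul_dotProduct, smul_eq_mul]
    ring
  exact dotProduct_self_eq_zero.1 (hr.trans hderiv)

end Gradient

section SymmIdempotent

variable {Q : Matrix (Fin k) (Fin k) ℝ}

theorem mulVec_dotProduct_eq_mulVec_dotProduct_mulVec (hsymm : Q.IsSymm)
    (hidem : IsIdempotentElem Q) (u v : Fin k → ℝ) :
    Q *ᵥ u ⬝ᵥ v = Q *ᵥ u ⬝ᵥ Q *ᵥ v := by
  rw [dotProduct_mulVec, ← mulVec_transpose, hsymm.eq, mulVec_mulVec, hidem.eq]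

theorem norm2_sq_eq_add (hsymm : Q.IsSymm) (hidem : IsIdempotentElem Q) (v : Fin k → ℝ) :
    norm2 v ^ 2 = norm2 (Q *ᵥ v) ^ 2 + norm2 ((1 - Q) *ᵥ v) ^ 2 := by
  have horth : Q *ᵥ v ⬝ᵥ (1 - Q) *ᵥ v = 0 := by
    rw [mulVec_dotProduct_eq_mulVec_dotProduct_mulVec hsymm hidem, mulVec_mulVec,
      mul_sub, mul_one, hidem.eq, sub_self, zero_mulVec, dotProduct_zero]
  have hv : v = Q *ᵥ v + (1 - Q) *ᵥ v := by
    rw [sub_mulVec, one_mulVec, add_sub_cancel]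
  simp only [norm2_sq]
  conv_lhs => rw [hv]
  rw [add_dotProduct, dotProduct_add, dotProduct_add, dotProduct_comm ((1 - Q) *ᵥ v), horth]
  ring

theorem norm2_mulVec_le (hsymm : Q.IsSymm) (hidem : IsIdempotentElem Q) (v : Fin k → ℝ) :
    norm2 (Q *ᵥ v) ≤ norm2 v := by
  have h := norm2_sq_eq_add hsymm hidem v
  have h0 := sq_nonneg (norm2 ((1 - Q) *ᵥ v))
  exact (pow_le_pow_iff_left₀ (norm2_nonneg _) (norm2_nonneg _) two_ne_zero).1 (by linarith)

end SymmIdempotent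

section Zf

variable {q : ℕ} {f : (Fin k → ℝ) → ℝ} {B : Matrix (Fin k) (Fin q) ℝ}
  {Q : Matrix (Fin q) (Fin q) ℝ} {zs : Fin k → ℝ}

theorem sqrt_dotProduct_mulVec_eq_norm2 (hsymm : Q.IsSymm) (hidem : IsIdempotentElem Q)
    (Δ : Fin k → ℝ) : Real.sqrt (Δ ⬝ᵥ (B * Q * Bᵀ) *ᵥ Δ) = norm2 (Q *ᵥ Bᵀ *ᵥ Δ) := by
  rw [← mulVec_mulVec, ← mulVec_mulVec, dotProduct_mulVec, ← mulVec_transpose, dotProduct_comm,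
    mulVec_dotProduct_eq_mulVec_dotProduct_mulVec hsymm hidem, ← norm2_sq,
    Real.sqrt_sq (norm2_nonneg _)]

theorem norm2_mulVec_le_Zf (hsymm : Q.IsSymm) (hidem : IsIdempotentElem Q) {Δ : Fin k → ℝ}
    (hΔ : zs + Δ ∈ fenchelDom f) : norm2 (Q *ᵥ Bᵀ *ᵥ Δ) ≤ Zf f B Q zs * norm2 Δ := by
  rcases eq_or_ne Δ 0 with rfl | hΔ0
  · simp [norm2]
  have hbdd : BddAbove {r | ∃ Δ : Fin k → ℝ, Δ ≠ 0 ∧ zs + Δ ∈ fenchelDom f ∧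
      r = Real.sqrt (Δ ⬝ᵥ (B * Q * Bᵀ) *ᵥ Δ) / norm2 Δ} := by
    obtain ⟨C, hC⟩ := exists_norm2_mulVec_le (Q * Bᵀ)
    refine ⟨C, ?_⟩
    rintro _ ⟨Δ', hΔ', -, rfl⟩
    rw [sqrt_dotProduct_mulVec_eq_norm2 hsymm hidem, div_le_iff₀ (norm2_pos hΔ'), mulVec_mulVec]
    exact hC Δ'
  have hle := le_csSup hbdd ⟨Δ, hΔ0, hΔ, rfl⟩
  rwa [sqrt_dotProduct_mulVec_eq_norm2 hsymm hidem, div_le_iff₀ (norm2_pos hΔ0)] at hle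

end Zf

section OrthProj

variable {d m : ℕ} {S : Matrix (Fin d) (Fin m) ℝ} {P : Matrix (Fin d) (Fin d) ℝ}

theorem IsOrthProj.isSymm (hP : IsOrthProj S P) : P.IsSymm := hP.1

theorem IsOrthProj.isIdempotentElem (hP : IsOrthProj S P) : IsIdempotentElem P := hP.2.1

theorem IsOrthProj.one_sub_mul_eq_zero (hP : IsOrthProj S P) : (1 - P) * S = 0 := by
  rw [Matrix.sub_mul, Matrix.one_mul, hP.2.2.1, sub_self]

theorem IsOrthProj.mulVec_eq_zero (hP : IsOrthProj S P) {v : Fin d → ℝ} (hv : Sᵀ *ᵥ v = 0) :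
    P *ᵥ v = 0 := by
  obtain ⟨C, hC⟩ := hP.2.2.2
  rw [← hP.isSymm.eq, hC, transpose_mul, ← mulVec_mulVec, hv, mulVec_zero]

end OrthProj

theorem add_inv_mul_sq_le {μ lam Z a p q E : ℝ} (hμ : 0 < μ) (hlam : 0 < lam)
    (hZ : 2 * μ * Z ^ 2 ≤ lam) (hq : 0 ≤ q) (hqZ : q ≤ Z * a) (hE : 0 ≤ E)
    (h : μ⁻¹ * a ^ 2 ≤ -(lam * p) + q * E) :
    p + (lam⁻¹ * q) ^ 2 ≤ μ * Z ^ 2 / (2 * lam) * E ^ 2 := by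
  have hamgm : Z * a * E ≤ μ⁻¹ * a ^ 2 / 2 + μ * Z ^ 2 * E ^ 2 / 2 := by
    have hsq := mul_nonneg (inv_pos.2 hμ).le (sq_nonneg (a - μ * Z * E))
    have hμμ : μ⁻¹ * μ = 1 := inv_mul_cancel₀ hμ.ne'
    nlinarith
  have hqE : q * E ≤ Z * a * E := mul_le_mul_of_nonneg_right hqZ hE
  have hq2 : q ^ 2 ≤ lam * (μ⁻¹ * a ^ 2) / 2 := by
    have hZa2 : q ^ 2 ≤ Z ^ 2 * a ^ 2 := by nlinarith
    have hgap : lam * (μ⁻¹ * a ^ 2) / 2 - Z ^ 2 * a ^ 2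
        = μ⁻¹ * a ^ 2 * (lam - 2 * μ * Z ^ 2) / 2 := by
      field_simp
    have hgap_nonneg : 0 ≤ μ⁻¹ * a ^ 2 * (lam - 2 * μ * Z ^ 2) / 2 := by
      have := sub_nonneg.2 hZ
      positivity
    linarith
  have key : lam ^ 2 * p + q ^ 2 ≤ lam * (μ * Z ^ 2 * E ^ 2) / 2 := by
    nlinarith [mul_le_mul_of_nonneg_left h hlam.le, mul_le_mul_of_nonneg_left hqE hlam.le,
      mul_le_mul_of_nonneg_left hamgm hlam.le]
  have hl2 : 0 < lam ^ 2 := by positivity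
  rw [← mul_le_mul_iff_right₀ hl2]
  calc lam ^ 2 * (p + (lam⁻¹ * q) ^ 2) = lam ^ 2 * p + q ^ 2 := by field_simp
    _ ≤ lam * (μ * Z ^ 2 * E ^ 2) / 2 := key
    _ = lam ^ 2 * (μ * Z ^ 2 / (2 * lam) * E ^ 2) := by field_simp

theorem norm2_inv_smul_sq_le {d : ℕ} {P : Matrix (Fin d) (Fin d) ℝ} (hsymm : P.IsSymm)
    (hidem : IsIdempotentElem P) {μ lam Z a : ℝ} (hμ : 0 < μ) (hlam : 0 < lam)
    (hZ : 2 * μ * Z ^ 2 ≤ lam) {w u e : Fin d → ℝ} (hPw : P *ᵥ w = -(lam • P *ᵥ u))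
    (hu : (1 - P) *ᵥ u = (1 - P) *ᵥ e) (hco : μ⁻¹ * a ^ 2 ≤ w ⬝ᵥ u)
    (hZa : norm2 ((1 - P) *ᵥ w) ≤ Z * a) :
    norm2 (lam⁻¹ • w) ^ 2 ≤ μ * Z ^ 2 / (2 * lam) * norm2 e ^ 2 := by
  have hsymm' : (1 - P).IsSymm := isSymm_one.sub hsymm
  have hidem' : IsIdempotentElem (1 - P) := hidem.one_sub
  have hsplit : w ⬝ᵥ u = -(lam * norm2 (P *ᵥ u) ^ 2) + (1 - P) *ᵥ w ⬝ᵥ (1 - P) *ᵥ e := by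
    conv_lhs => rw [show w = P *ᵥ w + (1 - P) *ᵥ w by rw [sub_mulVec, one_mulVec, add_sub_cancel]]
    rw [add_dotProduct, mulVec_dotProduct_eq_mulVec_dotProduct_mulVec hsymm hidem, hPw,
      mulVec_dotProduct_eq_mulVec_dotProduct_mulVec hsymm' hidem', hu, neg_dotProduct,
      smul_dotProduct, norm2_sq, smul_eq_mul]
  have hcs : (1 - P) *ᵥ w ⬝ᵥ (1 - P) *ᵥ e ≤ norm2 ((1 - P) *ᵥ w) * norm2 e :=
    (dotProduct_le_norm2_mul _ _).trans <|
      mul_le_mul_of_nonneg_left (norm2_mulVec_le hsymm' hidem' e) (norm2_nonneg _)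
  have hnorm : norm2 (lam⁻¹ • w) ^ 2
      = norm2 (P *ᵥ u) ^ 2 + (lam⁻¹ * norm2 ((1 - P) *ᵥ w)) ^ 2 := by
    rw [norm2_smul, mul_pow, norm2_sq_eq_add hsymm hidem w, hPw, norm2_neg, norm2_smul,
      abs_inv, abs_of_pos hlam]
    field_simp
  rw [hnorm]
  exact add_inv_mul_sq_le hμ hlam hZ (norm2_nonneg _) hZa (norm2_nonneg e) (by linarith)

theorem norm2_sketch_step_sub_sq_le {n d m : ℕ} {f : (Fin n → ℝ) → ℝ}
    {f' : (Fin n → ℝ) → Fin n → ℝ} {A : Matrix (Fin n) (Fin d) ℝ} {S : Matrix (Fin d) (Fin m) ℝ}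
    {P : Matrix (Fin d) (Fin d) ℝ} {μ lam : ℝ} (hμ : 0 < μ) (hlam : 0 < lam)
    (hconv : ConvexOn ℝ Set.univ f) (hdiff : ∀ w, HasFDerivAt f (dotCLM (f' w)) w)
    (hsmooth : ∀ w v, norm2 (f' w - f' v) ≤ μ * norm2 (w - v)) (hP : IsOrthProj S P)
    {xs : Fin d → ℝ} (hxs : Aᵀ *ᵥ f' (A *ᵥ xs) + lam • xs = 0)
    (hZ : 2 * μ * Zf f A (1 - P) (f' (A *ᵥ xs)) ^ 2 ≤ lam) {x : Fin d → ℝ} {α : Fin m → ℝ}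
    (hα : ∀ a, f ((A * S) *ᵥ α + A *ᵥ x) + lam / 2 * norm2 (S *ᵥ α + x) ^ 2
      ≤ f ((A * S) *ᵥ a + A *ᵥ x) + lam / 2 * norm2 (S *ᵥ a + x) ^ 2) :
    norm2 (-(lam⁻¹ • Aᵀ *ᵥ f' ((A * S) *ᵥ α + A *ᵥ x)) - xs) ^ 2
      ≤ μ * Zf f A (1 - P) (f' (A *ᵥ xs)) ^ 2 / (2 * lam) * norm2 (x - xs) ^ 2 := by
  set zs := f' (A *ᵥ xs)
  set y := S *ᵥ α + x
  have hy : (A * S) *ᵥ α + A *ᵥ x = A *ᵥ y := by rw [mulVec_add, mulVec_mulVec]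
  have hopt : Sᵀ *ᵥ (Aᵀ *ᵥ f' (A *ᵥ y) + lam • y) = 0 := by
    have h := transpose_mulVec_add_smul_eq_zero_of_forall_le hdiff (A * S) S (A *ᵥ x) x lam α hα
    rwa [hy, transpose_mul, ← mulVec_mulVec, ← mulVec_smul, ← mulVec_add] at h
  set Δ := f' (A *ᵥ y) - zs
  have hw : Aᵀ *ᵥ Δ = (Aᵀ *ᵥ f' (A *ᵥ y) + lam • y) - lam • (y - xs) := by
    rw [mulVec_sub, eq_neg_of_add_eq_zero_left hxs, smul_sub]
    abel
  have hPw : P *ᵥ Aᵀ *ᵥ Δ = -(lam • P *ᵥ (y - xs)) := by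
    rw [hw, mulVec_sub, hP.mulVec_eq_zero hopt, mulVec_smul, zero_sub]
  have hu : (1 - P) *ᵥ (y - xs) = (1 - P) *ᵥ (x - xs) := by
    rw [show y - xs = S *ᵥ α + (x - xs) by simp only [y]; abel, mulVec_add, mulVec_mulVec,
      hP.one_sub_mul_eq_zero, zero_mulVec, zero_add]
  have hco : μ⁻¹ * norm2 Δ ^ 2 ≤ Aᵀ *ᵥ Δ ⬝ᵥ (y - xs) := by
    have h := inv_mul_norm2_sub_sq_le_dotProduct hconv hdiff hμ hsmooth (A *ᵥ xs) (A *ᵥ y)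
    rwa [← mulVec_sub, dotProduct_mulVec, ← mulVec_transpose] at h
  have hdom : zs + Δ ∈ fenchelDom f := by
    rw [add_sub_cancel]
    exact gradient_mem_fenchelDom hconv hdiff _
  have hnext : -(lam⁻¹ • Aᵀ *ᵥ f' (A *ᵥ y)) - xs = -(lam⁻¹ • Aᵀ *ᵥ Δ) := by
    rw [show xs = lam⁻¹ • (lam • xs) by rw [smul_smul, inv_mul_cancel₀ hlam.ne', one_smul],
      eq_neg_of_add_eq_zero_right hxs, mulVec_sub, smul_sub, smul_neg]
    abel
  rw [hy, hnext, norm2_neg]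
  exact norm2_inv_smul_sq_le hP.isSymm hP.isIdempotentElem hμ hlam hZ hPw hu hco
    (norm2_mulVec_le_Zf (isSymm_one.sub hP.isSymm) hP.isIdempotentElem.one_sub hdom)

/-- iterative adaptive sketching, deterministic bound: starting from
`x̃⁽⁰⁾ = 0` and iterating `x̃⁽ᵗ⁾ = -λ⁻¹ Aᵀ ∇f(A S α⁽ᵗ⁾ + A x̃⁽ᵗ⁻¹⁾)` where `α⁽ᵗ⁾`
minimizes `α ↦ f(A S α + A x̃⁽ᵗ⁻¹⁾) + (λ/2)‖S α + x̃⁽ᵗ⁻¹⁾‖₂²`, if `λ ≥ 2 μ Z_f²` then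
after `T` iterations `‖x̃⁽ᵀ⁾ - x*‖₂ ≤ (μ Z_f²/(2λ))^{T/2} ‖x*‖₂`. -/
theorem statement_7 {n d m : ℕ} (f : (Fin n → ℝ) → ℝ) (f' : (Fin n → ℝ) → Fin n → ℝ)
    (A : Matrix (Fin n) (Fin d) ℝ) (μ lam : ℝ)
    (hμ : 0 < μ) (hlam : 0 < lam)
    (hconv : ConvexOn ℝ Set.univ f)
    (hdiff : ∀ w, HasFDerivAt f (dotCLM (f' w)) w)
    (hsmooth : ∀ w v, norm2 (f' w - f' v) ≤ μ * norm2 (w - v))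
    (S : Matrix (Fin d) (Fin m) ℝ) (P : Matrix (Fin d) (Fin d) ℝ)
    (hP : IsOrthProj S P)
    (xs : Fin d → ℝ)
    (hxs : ∀ x, f (A.mulVec xs) + lam / 2 * norm2 xs ^ 2
        ≤ f (A.mulVec x) + lam / 2 * norm2 x ^ 2)
    (hZ : 2 * μ * Zf f A (1 - P) (f' (A.mulVec xs)) ^ 2 ≤ lam)
    (xt : ℕ → Fin d → ℝ) (α : ℕ → Fin m → ℝ)
    (hx0 : xt 0 = 0)
    (hmin : ∀ t, ∀ a : Fin m → ℝ,
      f ((A * S).mulVec (α (t + 1)) + A.mulVec (xt t))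
          + lam / 2 * norm2 (S.mulVec (α (t + 1)) + xt t) ^ 2
        ≤ f ((A * S).mulVec a + A.mulVec (xt t))
          + lam / 2 * norm2 (S.mulVec a + xt t) ^ 2)
    (hstep : ∀ t, xt (t + 1)
      = -(lam⁻¹ • Aᵀ.mulVec (f' ((A * S).mulVec (α (t + 1)) + A.mulVec (xt t)))))
    (T : ℕ) :
    norm2 (xt T - xs)
      ≤ (μ * Zf f A (1 - P) (f' (A.mulVec xs)) ^ 2 / (2 * lam)) ^ ((T : ℝ) / 2)
        * norm2 xs := by
  have hxs_opt : Aᵀ *ᵥ f' (A *ᵥ xs) + lam • xs = 0 := by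
    have h := transpose_mulVec_add_smul_eq_zero_of_forall_le hdiff A (1 : Matrix (Fin d) (Fin d) ℝ)
      0 0 lam xs fun x => by simpa only [one_mulVec, add_zero] using hxs x
    rwa [add_zero, one_mulVec, add_zero, transpose_one, one_mulVec] at h
  set r := μ * Zf f A (1 - P) (f' (A *ᵥ xs)) ^ 2 / (2 * lam)
  have hr : 0 ≤ r := by positivity
  have hcontract : ∀ t, norm2 (xt (t + 1) - xs) ≤ √r * norm2 (xt t - xs) := by
    intro t
    rw [hstep t, ← pow_le_pow_iff_left₀ (norm2_nonneg _)
      (mul_nonneg (Real.sqrt_nonneg r) (norm2_nonneg _)) two_ne_zero, mul_pow, Real.sq_sqrt hr]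
    exact norm2_sketch_step_sub_sq_le hμ hlam hconv hdiff hsmooth hP hxs_opt hZ (hmin t)
  have hgeom := le_geom (u := fun t => norm2 (xt t - xs)) (Real.sqrt_nonneg r) T
    fun t _ => hcontract t
  rw [hx0, zero_sub, norm2_neg] at hgeom
  rwa [Real.sqrt_eq_rpow, ← Real.rpow_natCast, ← Real.rpow_mul hr, one_div_mul_eq_div] at hgeom

end Sketch
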